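/- Let β > 0, N ≥ 1, C₂ > 0, L > 0. Let V ∈ L¹(ℝ³) be nonnegative, let ω : ℝ³ → ℝ be measurable with 0 ≤ N ω(x) ≤ C₂/|x| for all x ≠ 0, and let φ : ℝ³ → ℂ be bounded, Lipschitz with Lipschitz constant L, and in L²(ℝ³). Define F(x) := ∫_{ℝ³} N^{3β} V(N^{β}(x−y)) ω(x−y) φ(y) ( φ(y)φ(x) − φ((x+y)/2)² ) dy. Then F ∈ L²(ℝ³) and ‖F‖_{L²(ℝ³)} ≤ C₂ L ‖φ‖_{L^∞} ‖φ‖_{L²} ‖V‖_{L¹} / N. -/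

import Mathlib

/-!
The Lipschitz bound `|φ(y)φ(x) − φ((x+y)/2)²| ≤ L ‖φ‖_∞ |x − y|` cancels the `1/|x − y|`
singularity of `ω`, so the integrand is dominated by `k(x − y) |φ(y)|` with
`k = (C₂ L ‖φ‖_∞ / N) · N^{3β} V(N^β ·)`. Young's inequality `‖k ⋆ |φ|‖₂ ≤ ‖k‖₁ ‖φ‖₂`
(Cauchy–Schwarz against the measure `k(x − y) dy`, then Tonelli) and the scale invariance
`‖N^{3β} V(N^β ·)‖₁ = ‖V‖₁` give the bound.
-/

open MeasureTheory Real
open scoped ENNReal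

noncomputable section

abbrev E3 : Type := EuclideanSpace ℝ (Fin 3)

namespace ENNReal

theorem lintegral_mul_sq_le {α : Type*} [MeasurableSpace α] {μ : Measure α} {w h : α → ℝ≥0∞}
    (hw : AEMeasurable w μ) (hh : AEMeasurable h μ) :
    (∫⁻ a, w a * h a ∂μ) ^ 2 ≤ (∫⁻ a, w a ∂μ) * ∫⁻ a, w a * h a ^ 2 ∂μ := by
  have hsq : ∀ a : ℝ≥0∞, (a ^ (2⁻¹ : ℝ)) ^ 2 = a := fun a => by
    rw [← ENNReal.rpow_natCast, ← ENNReal.rpow_mul]; norm_num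
  -- Cauchy–Schwarz for `√w` and `√w h`, written as Hölder with exponents `1/2 + 1/2 = 1`.
  have holder := lintegral_mul_norm_pow_le (g := fun a => w a * h a ^ 2) (p := 2⁻¹) (q := 2⁻¹)
    hw (hw.mul (hh.pow_const 2)) (by norm_num) (by norm_num) (by norm_num)
  have hwh : ∀ a, w a ^ (2⁻¹ : ℝ) * (w a * h a ^ 2) ^ (2⁻¹ : ℝ) = w a * h a := fun a => by
    rw [ENNReal.mul_rpow_of_nonneg _ _ (by norm_num), ← ENNReal.rpow_natCast, ← ENNReal.rpow_mul,
      ← mul_assoc, ← sq, hsq]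
    norm_num
  simp only [hwh] at holder
  calc (∫⁻ a, w a * h a ∂μ) ^ 2
      ≤ ((∫⁻ a, w a ∂μ) ^ (2⁻¹ : ℝ) * (∫⁻ a, w a * h a ^ 2 ∂μ) ^ (2⁻¹ : ℝ)) ^ 2 := by gcongr
    _ = (∫⁻ a, w a ∂μ) * ∫⁻ a, w a * h a ^ 2 ∂μ := by rw [mul_pow, hsq, hsq]

end ENNReal

section L2

variable {α F : Type*} [MeasurableSpace α] {μ : Measure α} [NormedAddCommGroup F] {f : α → F}

theorem memLp_two_iff_lintegral_enorm_sq_lt_top (hf : AEStronglyMeasurable f μ) :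
    MemLp f 2 μ ↔ ∫⁻ x, ‖f x‖ₑ ^ 2 ∂μ < ∞ := by
  rw [MemLp, and_iff_right hf,
    eLpNorm_lt_top_iff_lintegral_rpow_enorm_lt_top two_ne_zero ENNReal.ofNat_ne_top]
  simp

theorem integral_norm_sq_eq_toReal_lintegral (hf : AEStronglyMeasurable f μ) :
    ∫ x, ‖f x‖ ^ 2 ∂μ = (∫⁻ x, ‖f x‖ₑ ^ 2 ∂μ).toReal := by
  rw [integral_eq_lintegral_of_nonneg_ae (f := fun x => ‖f x‖ ^ 2)
    (.of_forall fun x => by positivity) (hf.norm.pow 2)]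
  simp_rw [ENNReal.ofReal_pow (norm_nonneg _), ofReal_norm]

end L2

section Convolution

variable {G : Type*} [AddCommGroup G] [MeasurableSpace G] [MeasurableAdd₂ G] [MeasurableNeg G]
  {μ : Measure G} [SFinite μ] [μ.IsAddLeftInvariant] [μ.IsNegInvariant]

theorem lintegral_convolution_sq_le {k h : G → ℝ≥0∞} (hk : AEMeasurable k μ)
    (hh : AEMeasurable h μ) :
    ∫⁻ x, (∫⁻ y, k (x - y) * h y ∂μ) ^ 2 ∂μ ≤ (∫⁻ z, k z ∂μ) ^ 2 * ∫⁻ y, h y ^ 2 ∂μ := by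
  have hsub := quasiMeasurePreserving_sub μ μ
  have hk_prod : AEMeasurable (fun p : G × G => k (p.1 - p.2) * h p.2 ^ 2) (μ.prod μ) :=
    (hk.comp_quasiMeasurePreserving hsub).mul
      ((hh.pow_const 2).comp_quasiMeasurePreserving Measure.quasiMeasurePreserving_snd)
  calc ∫⁻ x, (∫⁻ y, k (x - y) * h y ∂μ) ^ 2 ∂μ
      ≤ ∫⁻ x, (∫⁻ z, k z ∂μ) * ∫⁻ y, k (x - y) * h y ^ 2 ∂μ ∂μ := by
        refine lintegral_mono fun x => ?_
        have hkx : AEMeasurable (fun y => k (x - y)) μ := hk.comp_quasiMeasurePreserving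
          (Measure.measurePreserving_sub_left μ x).quasiMeasurePreserving
        simpa only [lintegral_sub_left_eq_self] using ENNReal.lintegral_mul_sq_le hkx hh
    _ = (∫⁻ z, k z ∂μ) * ∫⁻ y, ∫⁻ x, k (x - y) * h y ^ 2 ∂μ ∂μ := by
        rw [lintegral_const_mul'' _ hk_prod.lintegral_prod_right',
          lintegral_lintegral_swap hk_prod]
    _ = (∫⁻ z, k z ∂μ) ^ 2 * ∫⁻ y, h y ^ 2 ∂μ := by
        have hky : ∀ y, AEMeasurable (fun x => k (x - y)) μ := fun y =>
          hk.comp_quasiMeasurePreserving (measurePreserving_sub_right μ y).quasiMeasurePreserving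
        simp_rw [lintegral_mul_const'' _ (hky _), lintegral_sub_right_eq_self,
          lintegral_const_mul'' _ (hh.pow_const 2)]
        ring



theorem memLp_two_integral_of_norm_le_convolution {E F : Type*} [NormedAddCommGroup E]
    [NormedSpace ℝ E] [NormedAddCommGroup F] {f : G → G → E} {k : G → ℝ} {φ : G → F}
    (hf : AEStronglyMeasurable (Function.uncurry f) (μ.prod μ)) (hk : Integrable k μ)
    (hk0 : ∀ z, 0 ≤ k z) (hφ : MemLp φ 2 μ) (hfk : ∀ x y, ‖f x y‖ ≤ k (x - y) * ‖φ y‖) :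
    MemLp (fun x => ∫ y, f x y ∂μ) 2 μ ∧
      ∫ x, ‖∫ y, f x y ∂μ‖ ^ 2 ∂μ ≤ (∫ z, k z ∂μ) ^ 2 * ∫ y, ‖φ y‖ ^ 2 ∂μ := by
  have hF : AEStronglyMeasurable (fun x => ∫ y, f x y ∂μ) μ := hf.integral_prod_right'
  have hpointwise : ∀ x, ‖∫ y, f x y ∂μ‖ₑ ≤ ∫⁻ y, ENNReal.ofReal (k (x - y)) * ‖φ y‖ₑ ∂μ :=
    fun x => (enorm_integral_le_lintegral_enorm _).trans <| lintegral_mono fun y => by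
      rw [← ofReal_norm, ← ofReal_norm, ← ENNReal.ofReal_mul (hk0 _)]
      exact ENNReal.ofReal_le_ofReal (hfk x y)
  have hbound : ∫⁻ x, ‖∫ y, f x y ∂μ‖ₑ ^ 2 ∂μ ≤
      ENNReal.ofReal (∫ z, k z ∂μ) ^ 2 * ∫⁻ y, ‖φ y‖ₑ ^ 2 ∂μ := by
    rw [ofReal_integral_eq_lintegral_ofReal hk (.of_forall hk0)]
    exact (lintegral_mono fun x => by gcongr; exact hpointwise x).trans
      (lintegral_convolution_sq_le hk.aemeasurable.ennreal_ofReal hφ.1.enorm)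
  have hφ_fin := (memLp_two_iff_lintegral_enorm_sq_lt_top hφ.1).1 hφ
  have hrhs_fin : ENNReal.ofReal (∫ z, k z ∂μ) ^ 2 * ∫⁻ y, ‖φ y‖ₑ ^ 2 ∂μ < ∞ :=
    ENNReal.mul_lt_top (ENNReal.pow_lt_top ENNReal.ofReal_lt_top) hφ_fin
  refine ⟨(memLp_two_iff_lintegral_enorm_sq_lt_top hF).2 (hbound.trans_lt hrhs_fin), ?_⟩
  rw [integral_norm_sq_eq_toReal_lintegral hF, integral_norm_sq_eq_toReal_lintegral hφ.1]
  calc _ ≤ (ENNReal.ofReal (∫ z, k z ∂μ) ^ 2 * ∫⁻ y, ‖φ y‖ₑ ^ 2 ∂μ).toReal :=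
        ENNReal.toReal_mono hrhs_fin.ne hbound
    _ = _ := by
        rw [ENNReal.toReal_mul, ENNReal.toReal_pow,
          ENNReal.toReal_ofReal (integral_nonneg hk0)]

end Convolution

theorem norm_mul_sub_sq_midpoint_le {E R : Type*} [SeminormedAddCommGroup E] [NormedSpace ℝ E]
    [SeminormedCommRing R] {φ : E → R} {K : NNReal} {M : ℝ} (hφ : LipschitzWith K φ)
    (hM : ∀ x, ‖φ x‖ ≤ M) (x y : E) :
    ‖φ y * φ x - φ ((2 : ℝ)⁻¹ • (x + y)) ^ 2‖ ≤ K * M * ‖x - y‖ := by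
  set m := (2 : ℝ)⁻¹ • (x + y)
  have hM0 : 0 ≤ M := (norm_nonneg _).trans (hM x)
  have hxm : ‖x - m‖ = 2⁻¹ * ‖x - y‖ := by
    rw [show x - m = (2 : ℝ)⁻¹ • (x - y) by module, norm_smul]; norm_num
  have hym : ‖y - m‖ = 2⁻¹ * ‖x - y‖ := by
    rw [show y - m = -((2 : ℝ)⁻¹ • (x - y)) by module, norm_neg, norm_smul]; norm_num
  calc ‖φ y * φ x - φ m ^ 2‖ = ‖φ y * (φ x - φ m) + φ m * (φ y - φ m)‖ := by ring_nf
    _ ≤ ‖φ y‖ * ‖φ x - φ m‖ + ‖φ m‖ * ‖φ y - φ m‖ :=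
        (norm_add_le _ _).trans (add_le_add (norm_mul_le _ _) (norm_mul_le _ _))
    _ ≤ M * (K * ‖x - m‖) + M * (K * ‖y - m‖) := by
        gcongr
        exacts [hM y, hφ.norm_sub_le x m, hM m, hφ.norm_sub_le y m]
    _ = K * M * ‖x - y‖ := by rw [hxm, hym]; ring

theorem integral_rpow_mul_comp_rpow_smul {E : Type*} [NormedAddCommGroup E] [NormedSpace ℝ E]
    [MeasurableSpace E] [BorelSpace E] [FiniteDimensional ℝ E] (μ : Measure E)
    [μ.IsAddHaarMeasure] (V : E → ℝ) {N : ℝ} (hN : 0 < N) (β : ℝ) :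
    ∫ z, N ^ (Module.finrank ℝ E * β) * V (N ^ β • z) ∂μ = ∫ z, V z ∂μ := by
  rw [integral_const_mul, Measure.integral_comp_smul_of_nonneg μ V (N ^ β)
    (hR := (rpow_pos_of_pos hN β).le), smul_eq_mul, ← mul_assoc, ← rpow_natCast,
    ← rpow_mul hN.le, mul_comm β, ← rpow_neg hN.le, ← rpow_add hN, add_neg_cancel, rpow_zero,
    one_mul]

section ResidualTerm

variable {E : Type*} [NormedAddCommGroup E] [NormedSpace ℝ E] {N C L M : ℝ} {w ω : E → ℝ}
  {φ : E → ℂ}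

theorem norm_residual_integrand_le (hN : 0 < N) (hC : 0 ≤ C) (hL : 0 ≤ L) (hw : ∀ z, 0 ≤ w z)
    (hω0 : ∀ z, 0 ≤ N * ω z) (hωb : ∀ z, z ≠ 0 → N * ω z ≤ C / ‖z‖) (hφ : ∀ x, ‖φ x‖ ≤ M)
    (hφLip : LipschitzWith L.toNNReal φ) (x y : E) :
    ‖((w (x - y) * ω (x - y) : ℝ) : ℂ) * (φ y * (φ y * φ x - φ ((2 : ℝ)⁻¹ • (x + y)) ^ 2))‖ ≤
      C * L * M / N * w (x - y) * ‖φ y‖ := by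
  have hωz : 0 ≤ ω (x - y) := nonneg_of_mul_nonneg_right (hω0 _) hN
  have hω_decay : ω (x - y) * ‖x - y‖ ≤ C / N := by
    rcases eq_or_ne (x - y) 0 with hxy | hxy
    · rw [hxy, norm_zero, mul_zero]; positivity
    · rw [le_div_iff₀ hN, mul_right_comm, mul_comm _ N, ← le_div_iff₀ (norm_pos_iff.2 hxy)]
      exact hωb _ hxy
  have hbracket := norm_mul_sub_sq_midpoint_le hφLip hφ x y
  rw [Real.coe_toNNReal L hL] at hbracket
  rw [norm_mul, norm_mul, Complex.norm_real, Real.norm_of_nonneg (mul_nonneg (hw _) hωz)]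
  calc w (x - y) * ω (x - y) * (‖φ y‖ * ‖φ y * φ x - φ ((2 : ℝ)⁻¹ • (x + y)) ^ 2‖)
      ≤ w (x - y) * ω (x - y) * (‖φ y‖ * (L * M * ‖x - y‖)) := by
        have := mul_nonneg (hw (x - y)) hωz; gcongr
    _ = w (x - y) * (ω (x - y) * ‖x - y‖) * (L * M * ‖φ y‖) := by ring
    _ ≤ w (x - y) * (C / N) * (L * M * ‖φ y‖) := by
        have hM : 0 ≤ M := (norm_nonneg _).trans (hφ x)
        have := hw (x - y); gcongr
    _ = C * L * M / N * w (x - y) * ‖φ y‖ := by ring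

variable [MeasurableSpace E] [BorelSpace E] [SecondCountableTopology E] {μ : Measure E}
  [SFinite μ] [μ.IsAddLeftInvariant]

theorem aestronglyMeasurable_residual_integrand (hw : AEStronglyMeasurable w μ)
    (hω : Measurable ω) (hφ : Continuous φ) :
    AEStronglyMeasurable (fun p : E × E => ((w (p.1 - p.2) * ω (p.1 - p.2) : ℝ) : ℂ) *
      (φ p.2 * (φ p.2 * φ p.1 - φ ((2 : ℝ)⁻¹ • (p.1 + p.2)) ^ 2))) (μ.prod μ) := by
  refine .mul ?_ (by fun_prop : Continuous _).aestronglyMeasurable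
  exact Complex.continuous_ofReal.comp_aestronglyMeasurable
    ((hw.mul hω.aestronglyMeasurable).comp_quasiMeasurePreserving (quasiMeasurePreserving_sub μ μ))

end ResidualTerm

theorem stmt17 (β N C₂ L Mφ : ℝ) (hN : 1 ≤ N) (hC₂ : 0 < C₂) (hL : 0 < L)
    (V : E3 → ℝ) (hV1 : Integrable V (volume : Measure E3)) (hV0 : ∀ y, 0 ≤ V y)
    (ω : E3 → ℝ) (hωm : Measurable ω) (hω0 : ∀ x, 0 ≤ N * ω x)
    (hωb : ∀ x : E3, x ≠ 0 → N * ω x ≤ C₂ / ‖x‖)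
    (φ : E3 → ℂ) (hφbdd : ∀ x, ‖φ x‖ ≤ Mφ)
    (hφLip : LipschitzWith (Real.toNNReal L) φ)
    (hφ2 : MemLp φ 2 (volume : Measure E3)) :
    MemLp (fun x : E3 => ∫ y : E3,
        ((N ^ (3 * β) * V ((N ^ β : ℝ) • (x - y)) * ω (x - y) : ℝ) : ℂ) *
          (φ y * (φ y * φ x - φ ((2 : ℝ)⁻¹ • (x + y)) ^ 2))) 2 (volume : Measure E3) ∧
    Real.sqrt (∫ x : E3, ‖∫ y : E3,
        ((N ^ (3 * β) * V ((N ^ β : ℝ) • (x - y)) * ω (x - y) : ℝ) : ℂ) *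
          (φ y * (φ y * φ x - φ ((2 : ℝ)⁻¹ • (x + y)) ^ 2))‖ ^ 2)
      ≤ C₂ * L * Mφ * Real.sqrt (∫ y : E3, ‖φ y‖ ^ 2) * (∫ y : E3, V y) / N := by
  have hN0 : 0 < N := one_pos.trans_le hN
  have hMφ : 0 ≤ Mφ := (norm_nonneg _).trans (hφbdd 0)
  set w : E3 → ℝ := fun z => N ^ (3 * β) * V ((N ^ β : ℝ) • z)
  have hw : Integrable w :=
    ((integrable_comp_smul_iff volume V (rpow_pos_of_pos hN0 β).ne').2 hV1).const_mul _
  have hw_integral : ∫ z, w z = ∫ z, V z := by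
    simpa using integral_rpow_mul_comp_rpow_smul volume V hN0 β
  have hw0 : ∀ z, 0 ≤ w z := fun z => mul_nonneg (rpow_nonneg hN0.le _) (hV0 _)
  have hV_integral : 0 ≤ ∫ z, V z := integral_nonneg hV0
  obtain ⟨hmem, hbound⟩ := memLp_two_integral_of_norm_le_convolution
    (aestronglyMeasurable_residual_integrand hw.1 hωm hφLip.continuous)
    (hw.const_mul (C₂ * L * Mφ / N)) (fun z => by have := hw0 z; positivity) hφ2
    (norm_residual_integrand_le hN0 hC₂.le hL.le hw0 hω0 hωb hφbdd hφLip)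
  refine ⟨hmem, ?_⟩
  rw [integral_const_mul, hw_integral] at hbound
  calc _ ≤ Real.sqrt ((C₂ * L * Mφ / N * ∫ z, V z) ^ 2 * ∫ y, ‖φ y‖ ^ 2) :=
        Real.sqrt_le_sqrt hbound
    _ = _ := by
        rw [Real.sqrt_mul (sq_nonneg _), Real.sqrt_sq (by positivity)]
        ring
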